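/- Fix J in N with J >= 1, rates lambda : Fin J -> R with lambda_j > 0, costs b : Fin J -> R, capacities Q : Fin J -> N with Q_j >= 1, and A in R. Define C_F(T) = (A + sum over j of b_j * S(lambda_j * T, Q_j)) / T for T > 0. Then C_F(T) tends to sum over j of b_j * lambda_j as T tends to infinity. -/
import Mathlib


open scoped BigOperators

/-- Poisson probability mass function with mean `μ` at `r`. -/
noncomputable def poissonPMF (μ : ℝ) (r : ℕ) : ℝ :=
  Real.exp (-μ) * μ ^ r / (Nat.factorial r)

/-- Poisson tail probability `P(D ≥ k)` for a natural-number threshold `k`. -/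
noncomputable def Ptail (μ : ℝ) (k : ℕ) : ℝ :=
  ∑' r : ℕ, if k ≤ r then poissonPMF μ r else 0

/-- Expected shortage `E[(D - Q)^+]` for a natural-number capacity `Q`. -/
noncomputable def shortage (μ : ℝ) (Q : ℕ) : ℝ :=
  ∑' r : ℕ, if Q ≤ r then ((r : ℝ) - (Q : ℝ)) * poissonPMF μ r else 0

lemma pmf_nonneg {μ : ℝ} (hμ : 0 ≤ μ) (r : ℕ) : 0 ≤ poissonPMF μ r := by
  unfold poissonPMF; positivity

lemma summable_pmf (μ : ℝ) : Summable (poissonPMF μ) := by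
  unfold poissonPMF
  simpa [mul_div_assoc] using (Real.summable_pow_div_factorial μ).mul_left (Real.exp (-μ))

lemma tsum_pmf (μ : ℝ) : ∑' r, poissonPMF μ r = 1 := by
  unfold poissonPMF
  have : (fun r : ℕ => Real.exp (-μ) * μ ^ r / r.factorial)
      = fun r : ℕ => Real.exp (-μ) * (μ ^ r / r.factorial) := funext fun r => by ring
  rw [this, tsum_mul_left]
  rw [show ∑' n : ℕ, μ ^ n / n.factorial = Real.exp μ by
    rw [Real.exp_eq_exp_ℝ, NormedSpace.exp_eq_tsum_div]]
  rw [← Real.exp_add]; simp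

lemma pmf_succ (μ : ℝ) (n : ℕ) :
    ((n : ℝ) + 1) * poissonPMF μ (n + 1) = μ * poissonPMF μ n := by
  unfold poissonPMF
  have h : (n.factorial : ℝ) ≠ 0 := Nat.cast_ne_zero.mpr n.factorial_ne_zero
  have h2 : ((n : ℝ) + 1) ≠ 0 := by positivity
  rw [Nat.factorial_succ]
  push_cast
  field_simp
  ring

lemma summable_rpmf (μ : ℝ) : Summable (fun r : ℕ => (r : ℝ) * poissonPMF μ r) := by
  rw [← summable_nat_add_iff 1]
  have : (fun n : ℕ => ((n + 1 : ℕ) : ℝ) * poissonPMF μ (n + 1))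
      = fun n : ℕ => μ * poissonPMF μ n := funext fun n => by
    push_cast; exact pmf_succ μ n
  rw [this]
  exact (summable_pmf μ).mul_left μ

lemma tsum_rpmf (μ : ℝ) : ∑' r : ℕ, (r : ℝ) * poissonPMF μ r = μ := by
  rw [Summable.tsum_eq_zero_add (summable_rpmf μ)]
  have : (fun n : ℕ => ((n + 1 : ℕ) : ℝ) * poissonPMF μ (n + 1))
      = fun n : ℕ => μ * poissonPMF μ n := funext fun n => by
    push_cast; exact pmf_succ μ n
  simp only [this]
  rw [tsum_mul_left, tsum_pmf]
  simp

lemma shortage_summand_nonneg {μ : ℝ} (hμ : 0 ≤ μ) (Q r : ℕ) :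
    0 ≤ (if Q ≤ r then ((r : ℝ) - (Q : ℝ)) * poissonPMF μ r else 0) := by
  split
  · have : (Q : ℝ) ≤ r := by exact_mod_cast ‹Q ≤ r›
    exact mul_nonneg (by linarith) (pmf_nonneg hμ r)
  · exact le_refl _

lemma shortage_summand_le {μ : ℝ} (hμ : 0 ≤ μ) (Q r : ℕ) :
    (if Q ≤ r then ((r : ℝ) - (Q : ℝ)) * poissonPMF μ r else 0) ≤ (r : ℝ) * poissonPMF μ r := by
  split
  · exact mul_le_mul_of_nonneg_right (by simp [Nat.cast_nonneg]) (pmf_nonneg hμ r)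
  · exact mul_nonneg (Nat.cast_nonneg r) (pmf_nonneg hμ r)

lemma summable_shortage {μ : ℝ} (hμ : 0 ≤ μ) (Q : ℕ) :
    Summable (fun r : ℕ => if Q ≤ r then ((r : ℝ) - (Q : ℝ)) * poissonPMF μ r else 0) :=
  Summable.of_nonneg_of_le (shortage_summand_nonneg hμ Q) (shortage_summand_le hμ Q)
    (summable_rpmf μ)

lemma shortage_le {μ : ℝ} (hμ : 0 ≤ μ) (Q : ℕ) : shortage μ Q ≤ μ := by
  unfold shortage
  calc _ ≤ ∑' r : ℕ, (r : ℝ) * poissonPMF μ r :=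
        Summable.tsum_le_tsum (shortage_summand_le hμ Q) (summable_shortage hμ Q) (summable_rpmf μ)
    _ = μ := tsum_rpmf μ

lemma le_shortage {μ : ℝ} (hμ : 0 ≤ μ) (Q : ℕ) : μ - Q ≤ shortage μ Q := by
  have hs : Summable (fun r : ℕ => ((r : ℝ) - (Q : ℝ)) * poissonPMF μ r) := by
    have : (fun r : ℕ => ((r : ℝ) - (Q : ℝ)) * poissonPMF μ r)
        = fun r : ℕ => (r : ℝ) * poissonPMF μ r - (Q : ℝ) * poissonPMF μ r :=
      funext fun r => by ring
    rw [this]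
    exact (summable_rpmf μ).sub ((summable_pmf μ).mul_left _)
  have key : ∑' r : ℕ, ((r : ℝ) - (Q : ℝ)) * poissonPMF μ r = μ - Q := by
    have : (fun r : ℕ => ((r : ℝ) - (Q : ℝ)) * poissonPMF μ r)
        = fun r : ℕ => (r : ℝ) * poissonPMF μ r - (Q : ℝ) * poissonPMF μ r :=
      funext fun r => by ring
    rw [this, Summable.tsum_sub (summable_rpmf μ) ((summable_pmf μ).mul_left _),
      tsum_rpmf, tsum_mul_left, tsum_pmf, mul_one]
  rw [← key]
  unfold shortage
  refine Summable.tsum_le_tsum (fun r => ?_) hs (summable_shortage hμ Q)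
  split
  · exact le_refl _
  · have hn : ¬ (Q ≤ r) := by assumption
    have hr : (r : ℝ) < Q := by exact_mod_cast Nat.lt_of_not_le hn
    exact mul_nonpos_of_nonpos_of_nonneg (by linarith) (pmf_nonneg hμ r)

/-- asymptotic behavior of the fixed-cycle average cost. -/
theorem fixedCycleCost_tendsto (J : ℕ) (hJ : 1 ≤ J)
    (lam : Fin J → ℝ) (hlam : ∀ j, 0 < lam j)
    (b : Fin J → ℝ) (Q : Fin J → ℕ) (hQ : ∀ j, 1 ≤ Q j) (A : ℝ) :
    Filter.Tendsto (fun T => (A + ∑ j, b j * shortage (lam j * T) (Q j)) / T)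
      Filter.atTop (nhds (∑ j, b j * lam j)) := by
  have hdiv : ∀ j : Fin J, Filter.Tendsto
      (fun T : ℝ => shortage (lam j * T) (Q j) / T) Filter.atTop (nhds (lam j)) := by
    intro j
    have hlo : Filter.Tendsto (fun T : ℝ => lam j - (Q j : ℝ) / T) Filter.atTop (nhds (lam j)) := by
      have : Filter.Tendsto (fun T : ℝ => (Q j : ℝ) / T) Filter.atTop (nhds 0) :=
        Filter.Tendsto.div_atTop tendsto_const_nhds Filter.tendsto_id
      simpa using tendsto_const_nhds.sub this
    refine tendsto_of_tendsto_of_tendsto_of_le_of_le' hlo tendsto_const_nhds ?_ ?_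
    · filter_upwards [Filter.eventually_gt_atTop 0] with T hT
      have hμ : 0 ≤ lam j * T := le_of_lt (mul_pos (hlam j) hT)
      have h1 := le_shortage hμ (Q j)
      have : (lam j * T - Q j) / T ≤ shortage (lam j * T) (Q j) / T := by gcongr
      calc lam j - (Q j : ℝ) / T = (lam j * T - Q j) / T := by field_simp
        _ ≤ _ := this
    · filter_upwards [Filter.eventually_gt_atTop 0] with T hT
      have hμ : 0 ≤ lam j * T := le_of_lt (mul_pos (hlam j) hT)
      have h1 := shortage_le hμ (Q j)
      have : shortage (lam j * T) (Q j) / T ≤ (lam j * T) / T := by gcongr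
      calc shortage (lam j * T) (Q j) / T ≤ (lam j * T) / T := this
        _ = lam j := by field_simp
  have hA : Filter.Tendsto (fun T : ℝ => A / T) Filter.atTop (nhds 0) :=
    Filter.Tendsto.div_atTop tendsto_const_nhds Filter.tendsto_id
  have hsum : Filter.Tendsto (fun T : ℝ => ∑ j, b j * (shortage (lam j * T) (Q j) / T))
      Filter.atTop (nhds (∑ j, b j * lam j)) :=
    tendsto_finset_sum _ fun j _ => (hdiv j).const_mul (b j)
  have := hA.add hsum
  rw [zero_add] at this
  refine this.congr' ?_
  filter_upwards [Filter.eventually_gt_atTop 0] with T hT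
  rw [add_div, Finset.sum_div]
  congr 1
  exact Finset.sum_congr rfl fun j _ => (mul_div_assoc _ _ _).symm
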